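/- arXiv:1411.2517 — 6 statements merged into one kernel-verified Lean document; each statement's English description precedes it below -/
import Mathlib

section
/- For every vector v ∈ ℝⁿ and every n×n real matrix A, there exists a special orthogonal matrix O ∈ SO(n) such that the vector whose i-th component is |(Ov)_i| is linearly dependent with the vector whose i-th component is the Euclidean norm of the i-th row of OA. -/
/-!
With `P = v vᵀ` and `Q = A Aᵀ`, the matrix `S = (tr Q) P - (tr P) Q` is traceless, and the `i`-th
diagonal entry of `O S Oᵀ` is `(tr Q) (Ov)ᵢ² - (tr P) |(OA)ᵢ|²`. Once that diagonal vanishes,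
`√(tr Q) [Ov] = √(tr P) (|(OA)ᵢ|)ᵢ`, a nontrivial relation unless `A = 0`. To rotate `S` to zero
diagonal one needs an orthonormal basis `b` with `⟪b i, T (b i)⟫ = 0` for the operator `T` of `S`.
Such a basis exists for every traceless `T`: the quadratic form `x ↦ ⟪x, T x⟫` sums to `tr T = 0`
over any orthonormal basis, so it changes sign on the unit sphere, which is connected, and vanishes
at some unit vector `x`; the compression of `T` to `xᗮ` is again traceless, and one inducts on the
dimension. Negating one basis vector makes the rotation special orthogonal.
-/

open Matrix Module Submodule
open scoped RealInnerProductSpace InnerProductSpace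

section RCLike

variable {𝕜 E : Type*} [RCLike 𝕜] [NormedAddCommGroup E] [InnerProductSpace 𝕜 E]

theorem Orthonormal.fin_cons {m : ℕ} {x : E} {u : Fin m → E} (hx : ‖x‖ = 1)
    (hu : Orthonormal 𝕜 u) (hxu : ∀ k, ⟪x, u k⟫_𝕜 = 0) :
    Orthonormal 𝕜 (Fin.cons x u : Fin (m + 1) → E) := by
  refine ⟨Fin.cases hx hu.1, fun {i j} hij => ?_⟩
  cases i using Fin.cases <;> cases j using Fin.cases
  · exact absurd rfl hij
  · simp [hxu]
  · simp [inner_eq_zero_symm.mp (hxu _)]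
  · exact hu.2 fun h => hij (congrArg Fin.succ h)

theorem exists_orthonormalBasis_fin_cons [FiniteDimensional 𝕜 E] {m : ℕ} {x : E} (hx : ‖x‖ = 1)
    (c : OrthonormalBasis (Fin m) 𝕜 (𝕜 ∙ x)ᗮ) :
    ∃ b : OrthonormalBasis (Fin (m + 1)) 𝕜 E, ⇑b = Fin.cons x fun k => (c k : E) := by
  have hon : Orthonormal 𝕜 (Fin.cons x fun k => (c k : E) : Fin (m + 1) → E) :=
    .fin_cons hx (c.orthonormal.comp_linearIsometry (𝕜 ∙ x)ᗮ.subtypeₗᵢ)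
      fun k => inner_right_of_mem_orthogonal (mem_span_singleton_self x) (c k).2
  have hcard : Fintype.card (Fin (m + 1)) = finrank 𝕜 E := by
    rw [Fintype.card_fin, ← (𝕜 ∙ x).finrank_add_finrank_orthogonal,
      finrank_span_singleton (norm_ne_zero_iff.mp (hx ▸ one_ne_zero)),
      finrank_eq_card_basis c.toBasis, Fintype.card_fin, add_comm]
  exact ⟨.mk hon (hon.linearIndependent.span_eq_top_of_card_eq_finrank hcard).ge,
    OrthonormalBasis.coe_mk _ _⟩

noncomputable def LinearMap.compression (K : Submodule 𝕜 E) [K.HasOrthogonalProjection]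
    (T : E →ₗ[𝕜] E) : K →ₗ[𝕜] K :=
  K.orthogonalProjectionOnto.toLinearMap ∘ₗ T ∘ₗ K.subtype

theorem LinearMap.inner_compression_apply (K : Submodule 𝕜 E) [K.HasOrthogonalProjection]
    (T : E →ₗ[𝕜] E) (y z : K) : ⟪(y : E), T.compression K z⟫_𝕜 = ⟪(y : E), T z⟫_𝕜 :=
  K.inner_orthogonalProjectionOnto_eq_of_mem_left y (T z)

theorem LinearMap.trace_compression_orthogonal_span_singleton [FiniteDimensional 𝕜 E] {x : E}
    (hx : ‖x‖ = 1) (T : E →ₗ[𝕜] E) :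
    (T.compression (𝕜 ∙ x)ᗮ).trace 𝕜 _ = T.trace 𝕜 E - ⟪x, T x⟫_𝕜 := by
  obtain ⟨b, hb⟩ := exists_orthonormalBasis_fin_cons hx (stdOrthonormalBasis 𝕜 (𝕜 ∙ x)ᗮ)
  rw [trace_eq_sum_inner _ (stdOrthonormalBasis 𝕜 _), T.trace_eq_sum_inner b, hb,
    Fin.sum_univ_succ]
  simp only [coe_inner, inner_compression_apply, Fin.cons_zero, Fin.cons_succ]
  ring

end RCLike

section Real

variable {E : Type*} [NormedAddCommGroup E] [InnerProductSpace ℝ E] [FiniteDimensional ℝ E]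

theorem LinearMap.exists_norm_eq_one_inner_apply_self_eq_zero {T : E →ₗ[ℝ] E}
    (hT : T.trace ℝ E = 0) (hE : 0 < finrank ℝ E) : ∃ x : E, ‖x‖ = 1 ∧ ⟪x, T x⟫ = 0 := by
  set e := stdOrthonormalBasis ℝ E
  have hsum : ∑ i, ⟪e i, T (e i)⟫ = 0 := by rw [← T.trace_eq_sum_inner e, hT]
  have hne : (Finset.univ : Finset (Fin (finrank ℝ E))).Nonempty := ⟨⟨0, hE⟩, Finset.mem_univ _⟩
  obtain ⟨i, -, hi⟩ := Finset.exists_le_of_sum_le hne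
    (f := fun i => ⟪e i, T (e i)⟫) (g := fun _ => 0) (by simp [hsum])
  obtain ⟨j, -, hj⟩ := Finset.exists_le_of_sum_le hne
    (f := fun _ => 0) (g := fun i => ⟪e i, T (e i)⟫) (by simp [hsum])
  rcases eq_or_ne i j with rfl | hij
  · exact ⟨e i, e.orthonormal.1 i, le_antisymm hi hj⟩
  have hrank : 1 < Module.rank ℝ E := one_lt_rank_of_one_lt_finrank <| by
    simpa using Fintype.one_lt_card_iff.mpr ⟨i, j, hij⟩
  obtain ⟨x, hx, hxT⟩ := (isPreconnected_sphere hrank 0 1).intermediate_value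
    (mem_sphere_zero_iff_norm.mpr (e.orthonormal.1 i))
    (mem_sphere_zero_iff_norm.mpr (e.orthonormal.1 j))
    (continuous_id.inner (𝕜 := ℝ) T.continuous_of_finiteDimensional).continuousOn ⟨hi, hj⟩
  exact ⟨x, mem_sphere_zero_iff_norm.mp hx, hxT⟩

theorem LinearMap.exists_orthonormalBasis_inner_apply_self_eq_zero {T : E →ₗ[ℝ] E}
    (hT : T.trace ℝ E = 0) {n : ℕ} (hn : finrank ℝ E = n) :
    ∃ b : OrthonormalBasis (Fin n) ℝ E, ∀ i, ⟪b i, T (b i)⟫ = 0 := by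
  induction n generalizing E with
  | zero => exact ⟨(stdOrthonormalBasis ℝ E).reindex (finCongr hn), fun i => i.elim0⟩
  | succ n ih =>
    obtain ⟨x, hx, hxT⟩ := T.exists_norm_eq_one_inner_apply_self_eq_zero hT (by omega)
    have : Fact (finrank ℝ E = n + 1) := ⟨hn⟩
    obtain ⟨c, hc⟩ := ih (T := T.compression (ℝ ∙ x)ᗮ)
      (by rw [trace_compression_orthogonal_span_singleton hx, hT, hxT, sub_zero])
      (finrank_orthogonal_span_singleton (norm_ne_zero_iff.mp (hx ▸ one_ne_zero)))
    obtain ⟨b, hb⟩ := exists_orthonormalBasis_fin_cons hx c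
    refine ⟨b, Fin.cases ?_ fun k => ?_⟩
    · simpa [hb] using hxT
    · simpa [hb, inner_compression_apply] using hc k

end Real

theorem Matrix.exists_mem_specialOrthogonalGroup_diag_mul_mul_transpose_eq_zero
    {ι : Type*} [Fintype ι] [DecidableEq ι] {S : Matrix ι ι ℝ} (hS : S.trace = 0) :
    ∃ O ∈ specialOrthogonalGroup ι ℝ, (O * S * Oᵀ).diag = 0 := by
  cases isEmpty_or_nonempty ι
  · exact ⟨1, one_mem _, Subsingleton.elim _ _⟩
  set e := EuclideanSpace.basisFun ι ℝ
  obtain ⟨b₀, hb₀⟩ := (toLpLin 2 2 S).exists_orthonormalBasis_inner_apply_self_eq_zero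
    (by rw [toLpLin_eq_toLin, trace_toLin_eq, hS]) finrank_euclideanSpace
  set b := (b₀.reindex (Fintype.equivFin ι).symm).adjustToOrientation e.toBasis.orientation
  have hb : ∀ i, ⟪b i, toLpLin 2 2 S (b i)⟫ = 0 := fun i => by
    rcases (b₀.reindex (Fintype.equivFin ι).symm).adjustToOrientation_apply_eq_or_eq_neg
      e.toBasis.orientation i with h | h <;> simp [b, h, hb₀]
  have hrow : ∀ i, (e.toBasis.toMatrix b)ᵀ i = b i := fun i =>
    funext fun j => by simp [Basis.toMatrix_apply, e]
  refine ⟨(e.toBasis.toMatrix b)ᵀ,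
    mem_specialOrthogonalGroup_iff.mpr ⟨(mem_orthogonalGroup_iff ι ℝ).mpr ?_, ?_⟩, ?_⟩
  · rw [transpose_transpose, ← conjTranspose_eq_transpose_of_trivial]
    exact e.toMatrix_orthonormalBasis_conjTranspose_mul_self b
  · rw [det_transpose, ← Basis.det_apply]
    exact e.det_to_matrix_orthonormalBasis_of_same_orientation b
      ((b₀.reindex (Fintype.equivFin ι).symm).orientation_adjustToOrientation _).symm
  · ext i
    rw [diag_apply, mul_mul_apply, transpose_transpose, hrow, Pi.zero_apply, ← hb i,
      EuclideanSpace.inner_eq_star_dotProduct, toLpLin_apply, dotProduct_comm]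
    rfl

/-- For every `v ∈ ℝⁿ` and every `n × n` real matrix `A`, there is a special
orthogonal matrix `O` such that the vector of absolute values of the components of `Ov`
and the vector of Euclidean norms of the rows of `OA` are linearly dependent. -/
theorem exists_SO_abs_mulVec_rows_dependent {n : ℕ} (v : Fin n → ℝ)
    (A : Matrix (Fin n) (Fin n) ℝ) :
    ∃ O : Matrix (Fin n) (Fin n) ℝ, O * Oᵀ = 1 ∧ O.det = 1 ∧
      ¬ LinearIndependent ℝ
        ![(fun i => |(O.mulVec v) i|),
          (fun i => Real.sqrt (∑ j, ((O * A) i j) ^ 2))] := by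
  set F := (A * Aᵀ).trace
  set G := (vecMulVec v v).trace
  obtain ⟨O, hO, hdiag⟩ :=
    exists_mem_specialOrthogonalGroup_diag_mul_mul_transpose_eq_zero
      (S := F • vecMulVec v v - G • (A * Aᵀ))
      (by rw [trace_sub, trace_smul, trace_smul, smul_eq_mul, smul_eq_mul, mul_comm, sub_self])
  have hconj : O * (F • vecMulVec v v - G • (A * Aᵀ)) * Oᵀ =
      F • vecMulVec (O *ᵥ v) (O *ᵥ v) - G • ((O * A) * (O * A)ᵀ) := by
    rw [mul_sub, sub_mul, Matrix.mul_smul, Matrix.smul_mul, Matrix.mul_smul, Matrix.smul_mul,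
      mul_vecMulVec, vecMulVec_mul, vecMul_transpose, transpose_mul, Matrix.mul_assoc,
      Matrix.mul_assoc, Matrix.mul_assoc]
  have hrow : ∀ i, F * (O *ᵥ v) i ^ 2 = G * ∑ j, (O * A) i j ^ 2 := fun i => by
    have := congrFun hdiag i
    rw [hconj, diag_apply, Matrix.sub_apply, Matrix.smul_apply, Matrix.smul_apply,
      vecMulVec_apply, mul_apply] at this
    simpa only [transpose_apply, smul_eq_mul, ← sq, Pi.zero_apply, sub_eq_zero] using this
  obtain ⟨hO, hdet⟩ := mem_specialOrthogonalGroup_iff.mp hO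
  refine ⟨O, (mem_orthogonalGroup_iff _ ℝ).mp hO, hdet, fun hli => ?_⟩
  have hF : 0 ≤ F := (posSemidef_self_mul_conjTranspose A).trace_nonneg
  have hG : 0 ≤ G := (posSemidef_vecMulVec_self_star v).trace_nonneg
  have hrel : √F • (fun i => |(O *ᵥ v) i|) + (-√G) • (fun i => √(∑ j, (O * A) i j ^ 2)) = 0 := by
    funext i
    simp only [Pi.add_apply, Pi.smul_apply, smul_eq_mul, Pi.zero_apply, neg_mul]
    rw [← Real.sqrt_sq_eq_abs, ← Real.sqrt_mul hF, ← Real.sqrt_mul hG, hrow, add_neg_cancel]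
  obtain ⟨hF0, -⟩ := LinearIndependent.pair_iff.mp hli _ _ hrel
  have hA : A = 0 := trace_mul_conjTranspose_self_eq_zero_iff.mp ((Real.sqrt_eq_zero hF).mp hF0)
  exact hli.ne_zero 1 (by ext; simp [hA])
end

section
/- Let S be a real symmetric n×n matrix with trace zero. Then there exists an orthogonal matrix O such that all diagonal entries of O S Oᵀ are zero. -/
/-!
If some diagonal entry of `S` is nonzero, the zero trace provides indices `i`, `j` with
`S i i > 0 > S j j`. By the intermediate value theorem some rotation in the `(i, j)`-plane turns
the `(i, i)` entry into `0` and leaves the diagonal entries outside `{i, j}` unchanged. The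
conjugated matrix is again symmetric of trace zero and has fewer nonzero diagonal entries, so we
recurse.
-/

open Matrix Finset

theorem exists_unit_isotropic_of_nonneg_of_nonpos {a d : ℝ} (b : ℝ) (ha : 0 ≤ a) (hd : d ≤ 0) :
    ∃ c s : ℝ, c ^ 2 + s ^ 2 = 1 ∧ c ^ 2 * a + 2 * c * s * b + s ^ 2 * d = 0 := by
  let q : ℝ → ℝ := fun θ =>
    Real.cos θ ^ 2 * a + 2 * Real.cos θ * Real.sin θ * b + Real.sin θ ^ 2 * d
  have hq : Continuous q := by fun_prop
  obtain ⟨θ, -, hθ⟩ : ∃ θ ∈ Set.Icc 0 (Real.pi / 2), q θ = 0 :=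
    intermediate_value_Icc' Real.pi_div_two_pos.le hq.continuousOn
      ⟨by simpa [q] using hd, by simpa [q] using ha⟩
  exact ⟨Real.cos θ, Real.sin θ, Real.cos_sq_add_sin_sq θ, hθ⟩

theorem card_filter_ne_zero_lt {ι M : Type*} [Fintype ι] [DecidableEq ι] [Zero M] [DecidableEq M]
    {f g : ι → M} {i j : ι} (hfi : f i ≠ 0) (hfj : f j ≠ 0) (hgi : g i = 0)
    (hg : ∀ k, k ≠ i → k ≠ j → g k = f k) :
    #{k | g k ≠ 0} < #{k | f k ≠ 0} := by
  refine (card_le_card fun k hk => ?_).trans_lt (card_erase_lt_of_mem (by simpa using hfi))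
  simp only [mem_filter, mem_univ, true_and, mem_erase] at hk ⊢
  have hki : k ≠ i := by rintro rfl; exact hk hgi
  refine ⟨hki, ?_⟩
  by_cases hkj : k = j
  · exact hkj ▸ hfj
  · rwa [← hg k hki hkj]

namespace Matrix

section Givens

variable {ι R : Type*} [DecidableEq ι] [CommRing R]

def givensRotation (i j : ι) (c s : R) : Matrix ι ι R :=
  of fun k => if k = i then c • Pi.single i 1 + s • Pi.single j 1
    else if k = j then (-s) • Pi.single i 1 + c • Pi.single j 1 else Pi.single k 1

variable {i j : ι} {c s : R}

theorem givensRotation_row (k : ι) :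
    givensRotation i j c s k = if k = i then c • Pi.single i 1 + s • Pi.single j 1
      else if k = j then (-s) • Pi.single i 1 + c • Pi.single j 1 else Pi.single k 1 :=
  rfl

theorem givensRotation_transpose (hij : i ≠ j) :
    (givensRotation i j c s)ᵀ = givensRotation i j c (-s) := by
  ext k l
  simp only [transpose_apply, givensRotation, of_apply]
  split_ifs <;> simp_all [Pi.single_apply, eq_comm]

variable [Fintype ι]

theorem givensRotation_mul_row (M : Matrix ι ι R) (k : ι) :
    (givensRotation i j c s * M) k =
      if k = i then c • M i + s • M j else if k = j then (-s) • M i + c • M j else M k := by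
  rw [mul_apply_eq_vecMul, givensRotation_row]
  split_ifs <;> simp only [add_vecMul, smul_vecMul, single_one_vecMul, row]

theorem givensRotation_mul_transpose (hij : i ≠ j) (h : c ^ 2 + s ^ 2 = 1) :
    givensRotation i j c s * (givensRotation i j c s)ᵀ = 1 := by
  rw [givensRotation_transpose hij]
  refine funext fun k => ?_
  rw [givensRotation_mul_row, show (1 : Matrix ι ι R) k = Pi.single k 1 from
    funext fun l => one_eq_pi_single]
  simp only [givensRotation_row, if_neg hij.symm, if_true]
  split_ifs with hki hkj
  · subst hki
    linear_combination (norm := module) h • Pi.single k (1 : R)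
  · subst hkj
    linear_combination (norm := module) h • Pi.single k (1 : R)
  · rfl

theorem givensRotation_mul_mul_transpose_apply_left (M : Matrix ι ι R) :
    (givensRotation i j c s * M * (givensRotation i j c s)ᵀ) i i =
      c ^ 2 * M i i + c * s * (M i j + M j i) + s ^ 2 * M j j := by
  rw [← transpose_transpose (_ * M), ← transpose_mul]
  simp only [transpose_apply, givensRotation_mul_row, if_true, Pi.add_apply, Pi.smul_apply,
    smul_eq_mul]
  ring

theorem givensRotation_mul_mul_transpose_apply_of_ne (M : Matrix ι ι R) {k : ι} (hki : k ≠ i)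
    (hkj : k ≠ j) :
    (givensRotation i j c s * M * (givensRotation i j c s)ᵀ) k k = M k k := by
  rw [← transpose_transpose (_ * M), ← transpose_mul, transpose_apply, givensRotation_mul_row,
    if_neg hki, if_neg hkj, transpose_apply, givensRotation_mul_row, if_neg hki, if_neg hkj]

end Givens

theorem IsSymm.mul_mul_transpose {ι R : Type*} [Fintype ι] [CommSemiring R]
    {S : Matrix ι ι R} (hS : S.IsSymm) (A : Matrix ι ι R) : (A * S * Aᵀ).IsSymm := by
  rw [IsSymm, transpose_mul, transpose_mul, transpose_transpose, hS.eq, Matrix.mul_assoc]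

variable {ι : Type*} [Fintype ι] [DecidableEq ι]

theorem IsSymm.exists_orthogonal_conj_apply_self_eq_zero {S : Matrix ι ι ℝ} (hS : S.IsSymm)
    {i j : ι} (hij : i ≠ j) (hi : 0 ≤ S i i) (hj : S j j ≤ 0) :
    ∃ G : Matrix ι ι ℝ, G * Gᵀ = 1 ∧ (G * S * Gᵀ) i i = 0 ∧
      ∀ k, k ≠ i → k ≠ j → (G * S * Gᵀ) k k = S k k := by
  obtain ⟨c, s, hcs, hq⟩ := exists_unit_isotropic_of_nonneg_of_nonpos (S i j) hi hj
  refine ⟨givensRotation i j c s, givensRotation_mul_transpose hij hcs, ?_,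
    fun k hki hkj => givensRotation_mul_mul_transpose_apply_of_ne S hki hkj⟩
  rw [givensRotation_mul_mul_transpose_apply_left, hS.apply i j]
  linear_combination hq

theorem IsSymm.exists_orthogonal_diag_eq_zero {S : Matrix ι ι ℝ} (hS : S.IsSymm)
    (htr : S.trace = 0) : ∃ O : Matrix ι ι ℝ, O * Oᵀ = 1 ∧ ∀ k, (O * S * Oᵀ) k k = 0 := by
  by_cases hdiag : ∀ k, S k k = 0
  · exact ⟨1, by simp, by simpa using hdiag⟩
  obtain ⟨k, hk⟩ := not_forall.mp hdiag
  have hsum : ∑ k, S k k = 0 := htr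
  obtain ⟨i, -, hi⟩ := exists_pos_of_sum_zero_of_exists_nonzero _ hsum ⟨k, mem_univ k, hk⟩
  obtain ⟨j, -, hj⟩ := exists_pos_of_sum_zero_of_exists_nonzero (fun k => -S k k)
    (by simp [hsum]) ⟨k, mem_univ k, neg_ne_zero.mpr hk⟩
  replace hj : S j j < 0 := neg_pos.mp hj
  have hij : i ≠ j := by rintro rfl; linarith
  obtain ⟨G, hG, hGi, hGk⟩ := hS.exists_orthogonal_conj_apply_self_eq_zero hij hi.le hj.le
  have htr' : (G * S * Gᵀ).trace = 0 := by
    rw [trace_mul_cycle, mul_eq_one_comm.mp hG, Matrix.one_mul, htr]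
  obtain ⟨O, hO, hOS⟩ := IsSymm.exists_orthogonal_diag_eq_zero (hS.mul_mul_transpose G) htr'
  refine ⟨O * G, ?_, fun k => ?_⟩
  · rw [transpose_mul, Matrix.mul_assoc, ← Matrix.mul_assoc G, hG, Matrix.one_mul, hO]
  · simpa only [transpose_mul, Matrix.mul_assoc] using hOS k
termination_by #{k | S k k ≠ 0}
decreasing_by
  exact card_filter_ne_zero_lt (f := fun k => S k k) (g := fun k => (G * S * Gᵀ) k k) hi.ne'
    hj.ne hGi hGk

end Matrix

/-- A real symmetric matrix with trace zero can be rotated by an orthogonal matrix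
so that all its diagonal entries vanish. -/
theorem traceless_symmetric_zero_diagonal {n : ℕ} (S : Matrix (Fin n) (Fin n) ℝ)
    (hS : Sᵀ = S) (htr : S.trace = 0) :
    ∃ O : Matrix (Fin n) (Fin n) ℝ, O * Oᵀ = 1 ∧ ∀ i, (O * S * Oᵀ) i i = 0 :=
  IsSymm.exists_orthogonal_diag_eq_zero hS htr
end

section
/- Let (M, c) be the Bloch representation of a positive trace-preserving qubit map, i.e., |M r⃗ + c⃗| ≤ 1 for all unit vectors r⃗ ∈ ℝ³. Then for every vector n ∈ ℝ³, |nᵀc| + |nᵀM| ≤ |n|, where |·| is the Euclidean norm. -/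
/-!
By Cauchy–Schwarz, pairing `M r + c` with `n` gives `|⟪nᵀM, r⟫ + nᵀc| ≤ |n|` for every unit
vector `r`. Evaluating at the two unit vectors `r = ±u` with `⟪nᵀM, u⟫ = |nᵀM|` and choosing the
sign of `nᵀc` yields `|nᵀM| + |nᵀc| ≤ |n|`.
-/

open Matrix

/-- The Euclidean norm of a vector in `ℝ³`. -/
noncomputable def enorm3 (v : Fin 3 → ℝ) : ℝ := Real.sqrt (∑ i, v i ^ 2)

open RealInnerProductSpace WithLp

section InnerProductSpace

variable {E : Type*} [NormedAddCommGroup E] [InnerProductSpace ℝ E] [Nontrivial E]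

theorem exists_norm_eq_one_inner_eq_norm (v : E) : ∃ u : E, ‖u‖ = 1 ∧ ⟪v, u⟫ = ‖v‖ := by
  rcases eq_or_ne v 0 with rfl | hv
  · obtain ⟨u, hu⟩ := exists_norm_eq E zero_le_one
    exact ⟨u, hu, by simp⟩
  · refine ⟨‖v‖⁻¹ • v, by simp [norm_smul, hv], ?_⟩
    rw [real_inner_smul_right, real_inner_self_eq_norm_sq]
    field_simp

theorem norm_add_abs_le_of_forall_norm_eq_one {v : E} {t K : ℝ}
    (h : ∀ r : E, ‖r‖ = 1 → |⟪v, r⟫ + t| ≤ K) : ‖v‖ + |t| ≤ K := by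
  obtain ⟨u, hu, hvu⟩ := exists_norm_eq_one_inner_eq_norm v
  have hu_le := h u hu
  have hneg_le := h (-u) (by rwa [norm_neg])
  rw [hvu] at hu_le
  rw [inner_neg_right, hvu] at hneg_le
  rcases le_total 0 t with ht | ht
  · rw [abs_of_nonneg ht]
    exact (le_abs_self _).trans hu_le
  · rw [abs_of_nonpos ht]
    linarith [neg_le_abs (-‖v‖ + t)]

end InnerProductSpace

theorem enorm3_eq_norm (v : Fin 3 → ℝ) : enorm3 v = ‖toLp 2 v‖ := by
  simp [enorm3, EuclideanSpace.norm_eq]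

theorem inner_toLp_vecMul_add_dotProduct {ι : Type*} [Fintype ι] (M : Matrix ι ι ℝ)
    (n c : ι → ℝ) (r : EuclideanSpace ℝ ι) :
    ⟪toLp 2 (n ᵥ* M), r⟫ + n ⬝ᵥ c = ⟪toLp 2 n, toLp 2 (M *ᵥ ofLp r + c)⟫ := by
  simp only [EuclideanSpace.inner_eq_star_dotProduct, star_trivial]
  rw [dotProduct_comm, ← dotProduct_mulVec, dotProduct_comm _ n, dotProduct_add]

/-- If `(M, c)` is the Bloch representation of a positive trace-preserving qubit map,
i.e. `|M r + c| ≤ 1` for all unit vectors `r`, then for all `n ∈ ℝ³`,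
`|nᵀ c| + |nᵀ M| ≤ |n|`. -/
theorem bloch_positive_row_bound (M : Matrix (Fin 3) (Fin 3) ℝ) (c : Fin 3 → ℝ)
    (hpos : ∀ r : Fin 3 → ℝ, enorm3 r = 1 → enorm3 (M.mulVec r + c) ≤ 1) :
    ∀ n : Fin 3 → ℝ, |∑ i, n i * c i| + enorm3 (vecMul n M) ≤ enorm3 n := by
  intro n
  rw [add_comm, enorm3_eq_norm, enorm3_eq_norm]
  refine norm_add_abs_le_of_forall_norm_eq_one fun r hr => ?_
  have hr' : enorm3 (ofLp r) = 1 := by rwa [enorm3_eq_norm, toLp_ofLp]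
  calc |⟪toLp 2 (n ᵥ* M), r⟫ + n ⬝ᵥ c| = |⟪toLp 2 n, toLp 2 (M *ᵥ ofLp r + c)⟫| := by
        rw [inner_toLp_vecMul_add_dotProduct]
    _ ≤ ‖toLp 2 n‖ * ‖toLp 2 (M *ᵥ ofLp r + c)‖ := abs_real_inner_le_norm _ _
    _ ≤ ‖toLp 2 n‖ := by
        rw [← enorm3_eq_norm (M *ᵥ ofLp r + c)]
        exact mul_le_of_le_one_right (norm_nonneg _) (hpos _ hr')
end

section
/- Let M be a 3×3 real matrix and c ∈ ℝ³ such that |M r⃗ + c⃗| ≤ 1 for all unit vectors r⃗ (positivity of the associated qubit map). Then for every 3×3 real matrix K, |Kc| + ‖KM‖_2 ≤ ‖K‖_2, where ‖·‖_2 denotes the Frobenius (Hilbert–Schmidt) norm and |Kc| the Euclidean norm. -/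
open Matrix

/-- The Frobenius (Hilbert–Schmidt) norm of a `3 × 3` real matrix. -/
noncomputable def frob (A : Matrix (Fin 3) (Fin 3) ℝ) : ℝ :=
  Real.sqrt (∑ i, ∑ j, A i j ^ 2)

/-!
Write `G = MᵀM` and `h = Mᵀc`. Diagonalising `G` and solving the secular equation of the
trust-region problem gives `μ ≥ λ_max(G)` and a unit vector `x` with `(μ - G) x = h`. With
`ν = h ⬝ x = x ⬝ (μ - G) x ≥ 0`, positivity at `x` reads `μ + ν + |c|² ≤ 1`, and Cauchy–Schwarz
for the semidefinite form `μ - G` gives `|a c + M z|² ≤ (|c|² + ν) a² + μ |z|²` for all `a, z`.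
Applied to the rows of `(Kc / |Kc|) cᵀ + (KM / ‖KM‖) Mᵀ`, whose Frobenius pairing with `K` is
`|Kc| + ‖KM‖`, this bounds that matrix by `1` in Frobenius norm, and Cauchy–Schwarz concludes.
-/

open Filter Topology

section DiagonalShift

variable {ι : Type*}

/-- `(μ - diagonal γ)⁻¹ h`, with coordinate `i` equal to `0` when `μ = γ i`. -/
noncomputable def diagResolvent (γ h : ι → ℝ) (μ : ℝ) : ι → ℝ := fun i => h i / (μ - γ i)

theorem sub_mul_diagResolvent {γ h : ι → ℝ} {μ : ℝ} (hμ : ∀ i, h i ≠ 0 → γ i ≠ μ) (i : ι) :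
    (μ - γ i) * diagResolvent γ h μ i = h i := by
  by_cases hi : h i = 0
  · simp [diagResolvent, hi]
  · exact mul_div_cancel₀ _ (sub_ne_zero.2 (hμ i hi).symm)

theorem exists_diagResolvent_dotProduct_self_eq_one [Fintype ι] {γ h : ι → ℝ} {μ₀ : ℝ}
    (hμ₀ : ∀ i, h i ≠ 0 → γ i < μ₀)
    (hone : 1 ≤ diagResolvent γ h μ₀ ⬝ᵥ diagResolvent γ h μ₀) :
    ∃ μ, μ₀ ≤ μ ∧ diagResolvent γ h μ ⬝ᵥ diagResolvent γ h μ = 1 := by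
  have hcont : ∀ i, ContinuousOn (fun μ => diagResolvent γ h μ i) (Set.Ici μ₀) := fun i => by
    by_cases hi : h i = 0
    · simpa [diagResolvent, hi] using continuousOn_const
    · exact continuousOn_const.div (by fun_prop) fun μ hμ =>
        sub_ne_zero.2 ((hμ₀ i hi).trans_le hμ).ne'
  have hlim : ∀ i, Tendsto (fun μ => diagResolvent γ h μ i) atTop (𝓝 0) := fun i =>
    tendsto_const_nhds.div_atTop (tendsto_atTop_add_const_right _ _ tendsto_id)
  have hlim_sum : Tendsto (fun μ => diagResolvent γ h μ ⬝ᵥ diagResolvent γ h μ) atTop (𝓝 0) := by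
    simpa only [dotProduct, mul_zero, Finset.sum_const_zero] using
      tendsto_finsetSum Finset.univ fun i _ => (hlim i).mul (hlim i)
  obtain ⟨μ₁, hμ₁⟩ := (hlim_sum.eventually (gt_mem_nhds one_pos)).exists_forall_of_atTop
  obtain ⟨μ, hμ, hμ1⟩ := intermediate_value_Icc' (le_max_left μ₀ μ₁)
    ((continuousOn_finsetSum _ fun i _ => (hcont i).mul (hcont i)).mono Set.Icc_subset_Ici_self)
    ⟨(hμ₁ _ (le_max_right _ _)).le, hone⟩
  exact ⟨μ, hμ.1, hμ1⟩

theorem exists_unit_solution_diagonal_shift [Fintype ι] [Nonempty ι] (γ h : ι → ℝ) :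
    ∃ μ : ℝ, ∃ y : ι → ℝ, (∀ i, γ i ≤ μ) ∧ y ⬝ᵥ y = 1 ∧ ∀ i, (μ - γ i) * y i = h i := by
  classical
  obtain ⟨j, hj⟩ := Finite.exists_max γ
  set r := diagResolvent γ h
  -- `|r μ|` decreases to `0` as `μ → ∞`. Either it reaches `1` above `γ j = max γ`, or `h`
  -- vanishes where `γ` is maximal and the missing norm can be put in coordinate `j`.
  by_cases hroot : ∃ μ₀, γ j ≤ μ₀ ∧ (∀ i, h i ≠ 0 → γ i < μ₀) ∧ 1 ≤ r μ₀ ⬝ᵥ r μ₀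
  · obtain ⟨μ₀, hjμ₀, hμ₀, hone⟩ := hroot
    obtain ⟨μ, hμ, hμ1⟩ := exists_diagResolvent_dotProduct_self_eq_one hμ₀ hone
    exact ⟨μ, r μ, fun i => (hj i).trans (hjμ₀.trans hμ), hμ1,
      sub_mul_diagResolvent fun i hi => ((hμ₀ i hi).trans_le hμ).ne⟩
  push Not at hroot
  have hsep : ∀ i, h i ≠ 0 → γ i < γ j := by
    intro i hi
    refine (hj i).lt_of_ne fun heq => ?_
    have hpos : 0 < |h i| := abs_pos.2 hi
    refine (hroot (γ j + |h i|) (by linarith) fun k _ => by linarith [hj k]).not_ge ?_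
    calc 1 = r (γ j + |h i|) i * r (γ j + |h i|) i := by
          rw [← sq]
          simp only [r, diagResolvent, heq, add_sub_cancel_left, div_pow, sq_abs,
            div_self (pow_ne_zero 2 hi)]
      _ ≤ r (γ j + |h i|) ⬝ᵥ r (γ j + |h i|) :=
        Finset.single_le_sum (f := fun k => r _ k * r _ k)
          (fun k _ => mul_self_nonneg _) (Finset.mem_univ i)
  have hj0 : h j = 0 := not_not.1 fun hne => (hsep j hne).false
  have hrj : r (γ j) j = 0 := by simp [r, diagResolvent, hj0]
  have hg : r (γ j) ⬝ᵥ r (γ j) < 1 := hroot (γ j) le_rfl hsep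
  refine ⟨γ j, r (γ j) + Pi.single j √(1 - r (γ j) ⬝ᵥ r (γ j)), hj, ?_, fun i => ?_⟩
  · simp only [add_dotProduct, dotProduct_add, dotProduct_single, single_dotProduct,
      Pi.add_apply, Pi.single_eq_same, hrj, mul_zero, add_zero, zero_add]
    rw [Real.mul_self_sqrt (by linarith)]
    ring
  · rw [Pi.add_apply, mul_add, sub_mul_diagResolvent (fun i hi => (hsep i hi).ne) i,
      add_eq_left]
    rcases eq_or_ne i j with rfl | hij
    · simp
    · simp [hij]

end DiagonalShift

theorem two_mul_le_of_sq_le_mul {a w ν q : ℝ} (hν : 0 ≤ ν) (hq : 0 ≤ q) (h : w ^ 2 ≤ ν * q) :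
    2 * a * w ≤ ν * a ^ 2 + q := by
  rcases hν.eq_or_lt with rfl | hν
  · have : w = 0 := by nlinarith
    simp [this, hq]
  · nlinarith [sq_nonneg (ν * a - w), mul_pos hν hν]

theorem sq_dotProduct_mulVec_le {n : Type*} [Fintype n] {A : Matrix n n ℝ} (hA : A.IsSymm)
    (hA₀ : ∀ z, 0 ≤ z ⬝ᵥ A *ᵥ z) (x z : n → ℝ) :
    (x ⬝ᵥ A *ᵥ z) ^ 2 ≤ (x ⬝ᵥ A *ᵥ x) * (z ⬝ᵥ A *ᵥ z) := by
  have hswap : z ⬝ᵥ A *ᵥ x = x ⬝ᵥ A *ᵥ z := by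
    rw [dotProduct_mulVec, ← mulVec_transpose, hA.eq, dotProduct_comm]
  have hdisc := discrim_le_zero (a := z ⬝ᵥ A *ᵥ z) (b := 2 * (x ⬝ᵥ A *ᵥ z))
    (c := x ⬝ᵥ A *ᵥ x) fun t => by
      have := hA₀ (x + t • z)
      simp only [mulVec_add, mulVec_smul, add_dotProduct, dotProduct_add, smul_dotProduct,
        dotProduct_smul, smul_eq_mul, hswap] at this
      linarith
  rw [discrim] at hdisc
  linarith

theorem Matrix.IsHermitian.exists_unit_solution_shift {n : Type*} [Fintype n] [DecidableEq n]
    [Nonempty n] {G : Matrix n n ℝ} (hG : G.IsHermitian) (h : n → ℝ) :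
    ∃ μ : ℝ, ∃ x : n → ℝ, (∀ z, z ⬝ᵥ G *ᵥ z ≤ μ * (z ⬝ᵥ z)) ∧ x ⬝ᵥ x = 1 ∧
      μ • x - G *ᵥ x = h := by
  set U : Matrix n n ℝ := (hG.eigenvectorUnitary : Matrix n n ℝ)
  set γ := hG.eigenvalues
  have hUU : Uᵀ * U = 1 := by
    simpa [U, star_eq_conjTranspose] using Unitary.coe_star_mul_self hG.eigenvectorUnitary
  have hUU' : U * Uᵀ = 1 := by
    simpa [U, star_eq_conjTranspose] using Unitary.coe_mul_star_self hG.eigenvectorUnitary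
  have hGU : G * U = U * diagonal γ := by
    conv_lhs => rw [hG.spectral_theorem]
    simp [Unitary.conjStarAlgAut_apply, RCLike.ofReal_real_eq_id, mul_assoc,
      star_eq_conjTranspose, hUU, U, γ]
  have hdot : ∀ v w, (U *ᵥ v) ⬝ᵥ (U *ᵥ w) = v ⬝ᵥ w := fun v w => by
    rw [dotProduct_mulVec, ← mulVec_transpose, mulVec_mulVec, hUU, one_mulVec]
  have hGUv : ∀ v, G *ᵥ (U *ᵥ v) = U *ᵥ (γ * v) := fun v => by
    rw [mulVec_mulVec, hGU, ← mulVec_mulVec]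
    exact congrArg _ (funext (mulVec_diagonal γ v))
  obtain ⟨μ, y, hγμ, hy, hsol⟩ := exists_unit_solution_diagonal_shift γ (Uᵀ *ᵥ h)
  refine ⟨μ, U *ᵥ y, fun z => ?_, by rw [hdot, hy], ?_⟩
  · obtain ⟨w, rfl⟩ : ∃ w, U *ᵥ w = z := ⟨Uᵀ *ᵥ z, by rw [mulVec_mulVec, hUU', one_mulVec]⟩
    rw [hGUv, hdot, hdot]
    simp only [dotProduct, Finset.mul_sum, Pi.mul_apply]
    exact Finset.sum_le_sum fun i _ => by nlinarith [hγμ i, mul_self_nonneg (w i)]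
  · have : μ • y - γ * y = Uᵀ *ᵥ h := funext fun i => by simp [← hsol i, sub_mul]
    rw [hGUv, ← mulVec_smul, ← mulVec_sub, this, mulVec_mulVec, hUU', one_mulVec]

theorem exists_quadratic_bound_of_sphere_bound {n : Type*} [Fintype n] [DecidableEq n]
    [Nonempty n] (M : Matrix n n ℝ) (c : n → ℝ)
    (hpos : ∀ r, r ⬝ᵥ r = 1 → (M *ᵥ r + c) ⬝ᵥ (M *ᵥ r + c) ≤ 1) :
    ∃ l m : ℝ, 0 ≤ l ∧ 0 ≤ m ∧ l + m ≤ 1 ∧ ∀ (a : ℝ) (z : n → ℝ),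
      (a • c + M *ᵥ z) ⬝ᵥ (a • c + M *ᵥ z) ≤ l * a ^ 2 + m * (z ⬝ᵥ z) := by
  have hGz : ∀ z, z ⬝ᵥ (Mᵀ * M) *ᵥ z = (M *ᵥ z) ⬝ᵥ (M *ᵥ z) := fun z => by
    rw [← mulVec_mulVec, dotProduct_mulVec, vecMul_transpose]
  have hG : (Mᵀ * M).IsHermitian := isHermitian_iff_isSymm.2 (isSymm_transpose_mul_self M)
  obtain ⟨μ, x, hμ, hx, hsol⟩ := hG.exists_unit_solution_shift (Mᵀ *ᵥ c)
  set A := μ • (1 : Matrix n n ℝ) - Mᵀ * M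
  have hAz : ∀ z, A *ᵥ z = μ • z - (Mᵀ * M) *ᵥ z := fun z => by
    rw [sub_mulVec, smul_mulVec, one_mulVec]
  have hA₀ : ∀ z, 0 ≤ z ⬝ᵥ A *ᵥ z := fun z => by
    rw [hAz, dotProduct_sub, dotProduct_smul, smul_eq_mul, sub_nonneg]
    exact hμ z
  have hA : A.IsSymm := ((isSymm_one.smul μ).sub (isSymm_transpose_mul_self M))
  have hcM : ∀ z, c ⬝ᵥ M *ᵥ z = x ⬝ᵥ A *ᵥ z := fun z => by
    rw [dotProduct_mulVec, ← mulVec_transpose, ← hsol, ← hAz, dotProduct_comm,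
      dotProduct_mulVec, ← mulVec_transpose, hA.eq, dotProduct_comm]
  set ν := x ⬝ᵥ A *ᵥ x
  have hμν : μ + ν + c ⬝ᵥ c ≤ 1 := by
    have hxGx : x ⬝ᵥ (Mᵀ * M) *ᵥ x = μ - ν := by
      simp only [ν, hAz, dotProduct_sub, dotProduct_smul, smul_eq_mul, hx]; ring
    have := hpos x hx
    rw [add_dotProduct, dotProduct_add, dotProduct_add, ← hGz, hxGx, dotProduct_comm, hcM] at this
    linarith
  have hμ₀ : 0 ≤ μ := by
    have := hμ x
    rw [hx, mul_one, hGz] at this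
    exact le_trans (by simpa using dotProduct_star_self_nonneg (M *ᵥ x)) this
  refine ⟨c ⬝ᵥ c + ν, μ, add_nonneg (by simpa using dotProduct_star_self_nonneg c) (hA₀ x), hμ₀,
    by linarith, fun a z => ?_⟩
  have hcs := sq_dotProduct_mulVec_le hA hA₀ x z
  have hzAz : z ⬝ᵥ A *ᵥ z = μ * (z ⬝ᵥ z) - (M *ᵥ z) ⬝ᵥ (M *ᵥ z) := by
    rw [hAz, dotProduct_sub, dotProduct_smul, smul_eq_mul, hGz]
  simp only [add_dotProduct, dotProduct_add, smul_dotProduct, dotProduct_smul, smul_eq_mul,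
    dotProduct_comm (M *ᵥ z) c, hcM]
  have := two_mul_le_of_sq_le_mul (a := a) (hA₀ x) (hA₀ z) hcs
  rw [hzAz] at this
  linarith

theorem sum_dotProduct_le_sqrt_mul_sqrt {m n : Type*} [Fintype m] [Fintype n]
    (v w : m → n → ℝ) :
    ∑ i, v i ⬝ᵥ w i ≤ √(∑ i, v i ⬝ᵥ v i) * √(∑ i, w i ⬝ᵥ w i) := by
  simpa [dotProduct, Fintype.sum_prod_type, sq] using
    Real.sum_mul_le_sqrt_mul_sqrt Finset.univ (fun p : m × n => v p.1 p.2) (fun p => w p.1 p.2)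

theorem sum_dotProduct_self_le_of_quadratic_bound {m n : Type*} [Fintype m] [Fintype n]
    {M : Matrix n n ℝ} {c : n → ℝ} {l μ : ℝ}
    (hQ : ∀ (a : ℝ) (z : n → ℝ),
      (a • c + M *ᵥ z) ⬝ᵥ (a • c + M *ᵥ z) ≤ l * a ^ 2 + μ * (z ⬝ᵥ z))
    (a : m → ℝ) (Z : m → n → ℝ) :
    ∑ i, (a i • c + M *ᵥ Z i) ⬝ᵥ (a i • c + M *ᵥ Z i) ≤ l * (a ⬝ᵥ a) + μ * ∑ i, Z i ⬝ᵥ Z i := by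
  refine (Finset.sum_le_sum fun i _ => hQ (a i) (Z i)).trans_eq ?_
  rw [Finset.sum_add_distrib, ← Finset.mul_sum, ← Finset.mul_sum]
  simp only [dotProduct, sq]

theorem sqrt_add_sqrt_le_of_quadratic_bound {m n : Type*} [Fintype m] [Fintype n]
    {M : Matrix n n ℝ} {c : n → ℝ} {l μ : ℝ} (hl : 0 ≤ l) (hμ : 0 ≤ μ) (hlμ : l + μ ≤ 1)
    (hQ : ∀ (a : ℝ) (z : n → ℝ),
      (a • c + M *ᵥ z) ⬝ᵥ (a • c + M *ᵥ z) ≤ l * a ^ 2 + μ * (z ⬝ᵥ z))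
    (K : Matrix m n ℝ) :
    √((K *ᵥ c) ⬝ᵥ (K *ᵥ c)) + √(∑ i, (K * M) i ⬝ᵥ (K * M) i) ≤ √(∑ i, K i ⬝ᵥ K i) := by
  set A := √((K *ᵥ c) ⬝ᵥ (K *ᵥ c))
  set B := √(∑ i, (K * M) i ⬝ᵥ (K * M) i)
  have hA : (K *ᵥ c) ⬝ᵥ (K *ᵥ c) = A * A :=
    (Real.mul_self_sqrt (by simpa using dotProduct_star_self_nonneg (K *ᵥ c))).symm
  have hB : ∑ i, (K * M) i ⬝ᵥ (K * M) i = B * B :=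
    (Real.mul_self_sqrt (Finset.sum_nonneg fun i _ => by
      simpa using dotProduct_star_self_nonneg ((K * M) i))).symm
  -- Normalising by `A⁻¹` and `B⁻¹` is harmless when `A = 0` or `B = 0`, as `0⁻¹ = 0`.
  let X : m → n → ℝ := fun i => (A⁻¹ • K *ᵥ c) i • c + M *ᵥ (B⁻¹ • (K * M) i)
  have hKX : ∑ i, K i ⬝ᵥ X i = A + B := by
    have hrow : ∀ i, K i ⬝ᵥ X i =
        A⁻¹ * ((K *ᵥ c) i * (K *ᵥ c) i) + B⁻¹ * ((K * M) i ⬝ᵥ (K * M) i) := fun i => by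
      rw [dotProduct_add, dotProduct_smul, dotProduct_mulVec, dotProduct_smul, smul_eq_mul,
        smul_eq_mul, Pi.smul_apply, smul_eq_mul, mul_assoc]
      rfl
    rw [Finset.sum_congr rfl fun i _ => hrow i, Finset.sum_add_distrib, ← Finset.mul_sum,
      ← Finset.mul_sum]
    change A⁻¹ * ((K *ᵥ c) ⬝ᵥ (K *ᵥ c)) + _ = _
    rw [hA, hB, ← mul_assoc, ← mul_assoc, inv_mul_mul_self, inv_mul_mul_self]
  have hX : ∑ i, X i ⬝ᵥ X i ≤ 1 := calc
    _ ≤ l * ((A⁻¹ • K *ᵥ c) ⬝ᵥ (A⁻¹ • K *ᵥ c)) + μ * ∑ i, (B⁻¹ • (K * M) i) ⬝ᵥ (B⁻¹ • (K * M) i) :=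
      sum_dotProduct_self_le_of_quadratic_bound hQ _ _
    _ = l * (A⁻¹ * A) ^ 2 + μ * (B⁻¹ * B) ^ 2 := by
      simp only [smul_dotProduct, dotProduct_smul, smul_eq_mul, ← Finset.mul_sum, hA, hB]
      ring
    _ ≤ l * 1 + μ * 1 := by gcongr <;> exact pow_le_one₀ (by positivity) inv_mul_le_one
    _ ≤ 1 := by linarith
  calc A + B = ∑ i, K i ⬝ᵥ X i := hKX.symm
    _ ≤ √(∑ i, K i ⬝ᵥ K i) * √(∑ i, X i ⬝ᵥ X i) := sum_dotProduct_le_sqrt_mul_sqrt _ _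
    _ ≤ √(∑ i, K i ⬝ᵥ K i) :=
      mul_le_of_le_one_right (Real.sqrt_nonneg _) (Real.sqrt_le_one.2 hX)

theorem enorm3_eq_sqrt_dotProduct (v : Fin 3 → ℝ) : enorm3 v = √(v ⬝ᵥ v) := by
  simp only [enorm3, dotProduct, sq]

theorem frob_eq_sqrt_sum_dotProduct (A : Matrix (Fin 3) (Fin 3) ℝ) :
    frob A = √(∑ i, A i ⬝ᵥ A i) := by
  simp only [frob, dotProduct, sq]

/-- If `|M r + c| ≤ 1` for all unit vectors `r` (positivity of the associated qubit
map), then for every `3 × 3` real matrix `K`, `|Kc| + ‖KM‖₂ ≤ ‖K‖₂`. -/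
theorem bloch_positive_frobenius_bound (M : Matrix (Fin 3) (Fin 3) ℝ) (c : Fin 3 → ℝ)
    (hpos : ∀ r : Fin 3 → ℝ, enorm3 r = 1 → enorm3 (M.mulVec r + c) ≤ 1) :
    ∀ K : Matrix (Fin 3) (Fin 3) ℝ, enorm3 (K.mulVec c) + frob (K * M) ≤ frob K := by
  intro K
  obtain ⟨l, μ, hl, hμ, hlμ, hQ⟩ := exists_quadratic_bound_of_sphere_bound M c fun r hr => by
    have := hpos r (by rw [enorm3_eq_sqrt_dotProduct, hr, Real.sqrt_one])
    rwa [enorm3_eq_sqrt_dotProduct, Real.sqrt_le_one] at this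
  simpa only [enorm3_eq_sqrt_dotProduct, frob_eq_sqrt_sum_dotProduct] using
    sqrt_add_sqrt_le_of_quadratic_bound hl hμ hlμ hQ K
end

section
/- For any linear maps ψ₁,…,ψ_{n−1} on d×d matrices and 0 < λ ≤ 1, the composition Δ_λ ψ₁ Δ_λ ⋯ Δ_λ ψ_{n−1} Δ_λ equals the convex combination Σ_{i=0}^{n−1} [λⁱ(1−λ)/(1−λⁿ)] · ψ₁⋯ψ_i Δ_{λⁿ} ψ_{i+1}⋯ψ_{n−1}, where Δ_λ(X) = λX + (1−λ)(Tr X)𝟙/d and each ψ_j is trace-preserving and sends 𝟙 to a matrix (maps are linear). -/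
open Matrix

/-- The depolarizing map `Δ_λ(X) = λ X + (1-λ)(Tr X) 𝟙 / d`. -/
noncomputable def depol (d : ℕ) (lam : ℝ) (X : Matrix (Fin d) (Fin d) ℂ) :
    Matrix (Fin d) (Fin d) ℂ :=
  (lam : ℂ) • X + (((1 - lam : ℝ) : ℂ) / d) • X.trace • (1 : Matrix (Fin d) (Fin d) ℂ)

/-- `interleave D [ψ₁, …, ψ_k] = D ∘ ψ₁ ∘ D ∘ ψ₂ ∘ ⋯ ∘ ψ_k ∘ D`. -/
def interleave {α : Type*} (D : α → α) : List (α → α) → (α → α)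
  | [] => D
  | f :: fs => D ∘ f ∘ interleave D fs

/-- Composition of a list of maps: `compList [ψ₁, …, ψ_k] = ψ₁ ∘ ⋯ ∘ ψ_k`. -/
def compList {α : Type*} (l : List (α → α)) : α → α := l.foldr (· ∘ ·) id

/-!
Write `Δ_λ X = λ X + φ_λ(X) 𝟙` with `φ_λ = (1 - λ) Tr / d`, and let `n - 1` be the number of
filters. Since `Δ_λ` and the `ψ_j` preserve the trace, expanding `Δ_λ ψ₁ Δ_λ ⋯ ψ_{n-1} Δ_λ X` by
linearity gives `λⁿ ψ₁⋯ψ_{n-1} X + φ_λ(X) Σᵢ λⁱ ψ₁⋯ψᵢ 𝟙`. The `i`-th term of the convex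
combination expands in the same way to `λⁿ ψ₁⋯ψ_{n-1} X + φ_{λⁿ}(X) ψ₁⋯ψᵢ 𝟙`, and the weights
`cᵢ = λⁱ(1-λ)/(1-λⁿ)` sum to `1` and satisfy `cᵢ (1 - λⁿ) = λⁱ (1 - λ)`, i.e. `cᵢ φ_{λⁿ} = λⁱ φ_λ`.
-/

open Finset

section Composition

variable {α β : Type*}

@[simp]
theorem compList_nil : compList ([] : List (α → α)) = id := rfl

@[simp]
theorem compList_cons (f : α → α) (l : List (α → α)) : compList (f :: l) = f ∘ compList l := rfl

theorem compList_append (l₁ l₂ : List (α → α)) :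
    compList (l₁ ++ l₂) = compList l₁ ∘ compList l₂ := by
  induction l₁ with
  | nil => rfl
  | cons f l ih => rw [List.cons_append, compList_cons, compList_cons, ih, Function.comp_assoc]

theorem compList_take_comp_drop (l : List (α → α)) (i : ℕ) :
    compList (l.take i) ∘ compList (l.drop i) = compList l := by
  rw [← compList_append, List.take_append_drop]

theorem apply_compList_eq {φ : α → β} {l : List (α → α)} (hl : ∀ f ∈ l, ∀ x, φ (f x) = φ x)
    (x : α) : φ (compList l x) = φ x := by
  induction l with
  | nil => rfl
  | cons f l ih =>
    rw [compList_cons, Function.comp_apply, hl f List.mem_cons_self,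
      ih fun g hg => hl g (List.mem_cons_of_mem f hg)]

theorem apply_interleave_eq {φ : α → β} {D : α → α} (hD : ∀ x, φ (D x) = φ x)
    {l : List (α → α)} (hl : ∀ f ∈ l, ∀ x, φ (f x) = φ x) (x : α) :
    φ (interleave D l x) = φ x := by
  induction l with
  | nil => exact hD x
  | cons f l ih =>
    simp only [interleave, Function.comp_apply]
    rw [hD, hl f List.mem_cons_self, ih fun g hg => hl g (List.mem_cons_of_mem f hg)]

end Composition

section Linear

variable {R M : Type*}

theorem IsLinearMap.of_map_smul_add {N : Type*} [Semiring R] [AddCommMonoid M]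
    [AddCancelCommMonoid N] [Module R M] [Module R N] {f : M → N}
    (h : ∀ (a : R) (x y : M), f (a • x + y) = a • f x + f y) : IsLinearMap R f := by
  have hf0 : f 0 = 0 := by simpa using (h 1 0 0).symm
  exact ⟨fun x y => by simpa using h 1 x y, fun a x => by simpa [hf0] using h a x 0⟩

theorem isLinearMap_compList [Semiring R] [AddCommMonoid M] [Module R M] {l : List (M → M)}
    (hl : ∀ f ∈ l, IsLinearMap R f) : IsLinearMap R (compList l) := by
  induction l with
  | nil => exact (LinearMap.id : M →ₗ[R] M).isLinear
  | cons f l ih =>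
    have hf := hl f List.mem_cons_self
    have hfs := ih fun g hg => hl g (List.mem_cons_of_mem f hg)
    exact ((IsLinearMap.mk' f hf).comp (IsLinearMap.mk' _ hfs)).isLinear

theorem sum_smul_add_smul_eq [Semiring R] [AddCommMonoid M] [Module R M] {ι : Type*}
    {s : Finset ι} {c : ι → R} (hc : ∑ i ∈ s, c i = 1) (y : M) (t : R) (z : ι → M) :
    ∑ i ∈ s, c i • (y + t • z i) = y + ∑ i ∈ s, (c i * t) • z i := by
  simp only [smul_add, sum_add_distrib, ← sum_smul, hc, one_smul, smul_smul]

variable [CommRing R] [AddCommGroup M] [Module R M] {a : R} {φ : M → R} {e : M} {D : M → M}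
  {l : List (M → M)}

theorem compList_take_apply_eq (hD : ∀ x, D x = a • x + φ x • e)
    (hl : ∀ f ∈ l, IsLinearMap R f) (hφ : ∀ f ∈ l, ∀ x, φ (f x) = φ x) (i : ℕ) (x : M) :
    compList (l.take i) (D (compList (l.drop i) x)) =
      a • compList l x + φ x • compList (l.take i) e := by
  have hψ : IsLinearMap R (compList (l.take i)) :=
    isLinearMap_compList fun f hf => hl f (List.mem_of_mem_take hf)
  rw [hD, apply_compList_eq (fun f hf => hφ f (List.mem_of_mem_drop hf)), hψ.map_add,
    hψ.map_smul, hψ.map_smul, ← Function.comp_apply (f := compList (l.take i)),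
    compList_take_comp_drop]

theorem interleave_apply_eq (hD : ∀ x, D x = a • x + φ x • e) (hφD : ∀ x, φ (D x) = φ x)
    (hl : ∀ f ∈ l, IsLinearMap R f) (hφ : ∀ f ∈ l, ∀ x, φ (f x) = φ x) (x : M) :
    interleave D l x = a ^ (l.length + 1) • compList l x +
      φ x • ∑ i ∈ range (l.length + 1), a ^ i • compList (l.take i) e := by
  induction l with
  | nil => simp [interleave, hD]
  | cons f l ih =>
    have hf := hl f List.mem_cons_self
    have hl' := fun g hg => hl g (List.mem_cons_of_mem f hg)
    have hφ' := fun g hg => hφ g (List.mem_cons_of_mem f hg)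
    have hf_sum := map_sum (IsLinearMap.mk' f hf) (s := range (l.length + 1))
    simp only [IsLinearMap.mk'_apply] at hf_sum
    rw [interleave, Function.comp_apply, Function.comp_apply, hD, hφ f List.mem_cons_self,
      apply_interleave_eq hφD hφ', ih hl' hφ', hf.map_add, hf.map_smul, hf.map_smul, hf_sum,
      List.length_cons, sum_range_succ' _ (l.length + 1), pow_zero, one_smul, List.take_zero,
      compList_nil]
    simp only [List.take_succ_cons, compList_cons, Function.comp_apply, id_eq, hf.map_smul,
      smul_add, smul_sum, smul_smul, pow_succ', mul_left_comm a]
    abel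

end Linear

section Depolarizing

variable (d : ℕ) (lam : ℝ)

theorem depol_apply (X : Matrix (Fin d) (Fin d) ℂ) :
    depol d lam X = (lam : ℂ) • X + ((((1 - lam : ℝ) : ℂ) / d) * X.trace) • 1 := by
  rw [depol, smul_smul]

theorem trace_depol (X : Matrix (Fin d) (Fin d) ℂ) : (depol d lam X).trace = X.trace := by
  rcases d.eq_zero_or_pos with rfl | hd
  · simp [Matrix.trace]
  · have hd' : (d : ℂ) ≠ 0 := Nat.cast_ne_zero.mpr hd.ne'
    simp only [depol, trace_add, trace_smul, trace_one, Fintype.card_fin, smul_eq_mul]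
    field_simp
    push_cast
    ring

end Depolarizing

theorem sum_geom_weights_eq_one {K : Type*} [Field K] {x : K} {m : ℕ} (hx : 1 - x ^ m ≠ 0) :
    ∑ i ∈ range m, x ^ i * (1 - x) / (1 - x ^ m) = 1 := by
  rw [← sum_div, ← sum_mul, geom_sum_mul_neg, div_self hx]

theorem depol_interleaved_convex_decomp_general (d : ℕ) (lam : ℝ)
    (h0 : 0 < lam) (h1 : lam < 1)
    (l : List (Matrix (Fin d) (Fin d) ℂ → Matrix (Fin d) (Fin d) ℂ))
    (hlin : ∀ f ∈ l, ∀ (a : ℂ) (X Y : Matrix (Fin d) (Fin d) ℂ),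
      f (a • X + Y) = a • f X + f Y)
    (htr : ∀ f ∈ l, ∀ X : Matrix (Fin d) (Fin d) ℂ, (f X).trace = X.trace)
    (X : Matrix (Fin d) (Fin d) ℂ) :
    interleave (depol d lam) l X =
      ∑ i ∈ Finset.range (l.length + 1),
        (((lam ^ i * (1 - lam) / (1 - lam ^ (l.length + 1)) : ℝ)) : ℂ) •
          compList (l.take i) (depol d (lam ^ (l.length + 1)) (compList (l.drop i) X)) := by
  set n := l.length
  set φ : ℝ → Matrix (Fin d) (Fin d) ℂ → ℂ := fun μ Y => ((1 - μ : ℝ) : ℂ) / d * Y.trace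
  have hl : ∀ f ∈ l, IsLinearMap ℂ f := fun f hf => .of_map_smul_add (hlin f hf)
  have hφ : ∀ μ, ∀ f ∈ l, ∀ Y, φ μ (f Y) = φ μ Y := fun μ f hf Y => by simp only [φ, htr f hf]
  have hne : 1 - lam ^ (n + 1) ≠ 0 :=
    sub_ne_zero.mpr (pow_lt_one₀ h0.le h1 n.succ_ne_zero).ne'
  have hsum : ∑ i ∈ range (n + 1), ((lam ^ i * (1 - lam) / (1 - lam ^ (n + 1)) : ℝ) : ℂ) = 1 := by
    exact_mod_cast sum_geom_weights_eq_one hne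
  have hweight (i : ℕ) : ((lam ^ i * (1 - lam) / (1 - lam ^ (n + 1)) : ℝ) : ℂ) *
      φ (lam ^ (n + 1)) X = lam ^ i * φ lam X := by
    simp only [φ]
    rw [← mul_assoc, ← mul_div_assoc, ← Complex.ofReal_mul, div_mul_cancel₀ _ hne]
    push_cast
    ring
  rw [interleave_apply_eq (φ := φ lam) (depol_apply d lam) (fun Y => by simp only [φ, trace_depol])
    hl (hφ lam)]
  simp_rw [compList_take_apply_eq (φ := φ (lam ^ (n + 1))) (depol_apply d _) hl (hφ _)]
  rw [sum_smul_add_smul_eq hsum, smul_sum, Complex.ofReal_pow]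
  congr 1
  refine sum_congr rfl fun i _ => ?_
  rw [hweight, smul_smul, mul_comm]

/-- `Δ_λ ψ₁ Δ_λ ⋯ Δ_λ ψ_{n-1} Δ_λ` is the convex combination
`Σ_{i=0}^{n-1} [λⁱ(1-λ)/(1-λⁿ)] ψ₁⋯ψ_i Δ_{λⁿ} ψ_{i+1}⋯ψ_{n-1}`, where `n - 1` is the
number of filters and each filter is linear and trace-preserving. -/
theorem depol_interleaved_convex_decomp (d : ℕ) (hd : 0 < d) (lam : ℝ)
    (h0 : 0 < lam) (h1 : lam < 1)
    (l : List (Matrix (Fin d) (Fin d) ℂ → Matrix (Fin d) (Fin d) ℂ))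
    (hlin : ∀ f ∈ l, ∀ (a : ℂ) (X Y : Matrix (Fin d) (Fin d) ℂ),
      f (a • X + Y) = a • f X + f Y)
    (htr : ∀ f ∈ l, ∀ X : Matrix (Fin d) (Fin d) ℂ, (f X).trace = X.trace)
    (X : Matrix (Fin d) (Fin d) ℂ) :
    interleave (depol d lam) l X =
      ∑ i ∈ Finset.range (l.length + 1),
        (((lam ^ i * (1 - lam) / (1 - lam ^ (l.length + 1)) : ℝ)) : ℂ) •
          compList (l.take i) (depol d (lam ^ (l.length + 1)) (compList (l.drop i) X)) :=
  depol_interleaved_convex_decomp_general d lam h0 h1 l hlin htr X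
end

section
/- For a unital qubit channel in diagonal Bloch form (L,0) with L = diag(l₁,l₂,l₃), the channel is entanglement-breaking if and only if |l₁|+|l₂|+|l₃| ≤ 1; equivalently, (M,0) is entanglement-breaking iff the trace norm ‖M‖₁ ≤ 1. -/
/-!
Write `X_i = σ_i ⊗ σ_iᵀ`. If `|l₀| + |l₁| + |l₂| ≤ 1`, the Choi matrix is a nonnegative
combination of the matrices `a • 1 + t • X_i` with `|t| ≤ a`, and each of these is separable:
with `P± = (1 ± σ)/2`, `1 ± X = 2 (P₊ ⊗ P±ᵀ + P₋ ⊗ P∓ᵀ)`.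
Conversely a separable matrix is positive semidefinite and so is its partial transpose (PPT).
The Bell vectors are eigenvectors of the Choi matrix, with eigenvalues `(1 ± l₀ ± l₁ ± l₂)/4`
for the four sign patterns with an even number of minus signs; the partial transpose is the Choi
matrix with `l₁` negated (as `σ_yᵀ = -σ_y`), which supplies the four odd patterns. Choosing the
signs against those of the `lᵢ` gives `1 - |l₀| - |l₁| - |l₂| ≥ 0`.
-/

open Matrix Kronecker ComplexOrder

/-- A two-qubit (4 × 4) matrix is separable if it is a finite sum of Kronecker
products of positive semidefinite matrices. -/
def IsSepState (R : Matrix (Fin 2 × Fin 2) (Fin 2 × Fin 2) ℂ) : Prop :=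
  ∃ (n : ℕ) (A B : Fin n → Matrix (Fin 2) (Fin 2) ℂ),
    (∀ i, (A i).PosSemidef ∧ (B i).PosSemidef) ∧ R = ∑ i, A i ⊗ₖ B i

/-- The Pauli matrices `X`, `Y`, `Z`. -/
noncomputable def pauli : Fin 3 → Matrix (Fin 2) (Fin 2) ℂ :=
  ![!![0, 1; 1, 0], !![0, -Complex.I; Complex.I, 0], !![1, 0; 0, -1]]

theorem pauli_isHermitian (i : Fin 3) : (pauli i).IsHermitian := by
  fin_cases i <;> ext a b <;> fin_cases a <;> fin_cases b <;> simp [pauli]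

theorem pauli_mul_self (i : Fin 3) : pauli i * pauli i = 1 := by
  fin_cases i <;> ext a b <;> fin_cases a <;> fin_cases b <;>
    simp [pauli, mul_apply, Fin.sum_univ_two]

theorem pauli_transpose_zero : (pauli 0)ᵀ = pauli 0 := by
  ext a b; fin_cases a <;> fin_cases b <;> simp [pauli]

theorem pauli_transpose_one : (pauli 1)ᵀ = -pauli 1 := by
  ext a b; fin_cases a <;> fin_cases b <;> simp [pauli]

theorem pauli_transpose_two : (pauli 2)ᵀ = pauli 2 := by
  ext a b; fin_cases a <;> fin_cases b <;> simp [pauli]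

namespace Matrix

variable {m n : Type*} {α : Type*}

/-- Transposition in the second tensor factor. -/
def partialTranspose (R : Matrix (m × n) (m × n) α) : Matrix (m × n) (m × n) α :=
  of fun a b => R (a.1, b.2) (b.1, a.2)

@[simp]
theorem partialTranspose_kronecker [Mul α] (A : Matrix m m α) (B : Matrix n n α) :
    partialTranspose (A ⊗ₖ B) = A ⊗ₖ Bᵀ :=
  rfl

@[simp]
theorem partialTranspose_add [Add α] (R S : Matrix (m × n) (m × n) α) :
    partialTranspose (R + S) = partialTranspose R + partialTranspose S :=
  rfl

@[simp]
theorem partialTranspose_neg [Neg α] (R : Matrix (m × n) (m × n) α) :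
    partialTranspose (-R) = -partialTranspose R :=
  rfl

@[simp]
theorem partialTranspose_smul {β : Type*} [SMul β α] (c : β) (R : Matrix (m × n) (m × n) α) :
    partialTranspose (c • R) = c • partialTranspose R :=
  rfl

@[simp]
theorem partialTranspose_sum [AddCommMonoid α] {ι : Type*} (s : Finset ι)
    (R : ι → Matrix (m × n) (m × n) α) :
    partialTranspose (∑ i ∈ s, R i) = ∑ i ∈ s, partialTranspose (R i) := by
  ext; simp [partialTranspose, sum_apply]

@[simp]
theorem partialTranspose_one [DecidableEq m] [DecidableEq n] [Zero α] [One α] :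
    partialTranspose (1 : Matrix (m × n) (m × n) α) = 1 := by
  ext ⟨i, j⟩ ⟨k, l⟩
  simp [partialTranspose, one_apply, eq_comm]

theorem kronecker_neg [Mul α] [HasDistribNeg α] {l p : Type*} (A : Matrix m n α)
    (B : Matrix l p α) : A ⊗ₖ (-B) = -(A ⊗ₖ B) := by
  ext; simp

theorem posSemidef_half_smul_one_add {𝕜 : Type*} [Fintype n] [DecidableEq n] [RCLike 𝕜]
    {σ : Matrix n n 𝕜} (hσ : σ.IsHermitian) (hσσ : σ * σ = 1) :
    ((1 / 2 : 𝕜) • (1 + σ)).PosSemidef := by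
  have hsq : (1 + σ) * (1 + σ) = (2 : 𝕜) • (1 + σ) := by
    rw [mul_add, mul_one, add_mul, one_mul, hσσ]
    module
  -- `(1 + σ) / 2` is a Hermitian idempotent `P`, so `P = Pᴴ * P`
  have hstar : ((1 / 2 : 𝕜) • (1 + σ))ᴴ * ((1 / 2 : 𝕜) • (1 + σ)) = (1 / 2 : 𝕜) • (1 + σ) := by
    rw [conjTranspose_smul, conjTranspose_add, conjTranspose_one, hσ.eq, smul_mul_smul, hsq,
      smul_smul]
    norm_num
  exact hstar ▸ posSemidef_conjTranspose_mul_self _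

end Matrix

namespace IsSepState

theorem kronecker {A B : Matrix (Fin 2) (Fin 2) ℂ} (hA : A.PosSemidef) (hB : B.PosSemidef) :
    IsSepState (A ⊗ₖ B) :=
  ⟨1, fun _ => A, fun _ => B, fun _ => ⟨hA, hB⟩, by simp⟩

theorem add {R S : Matrix (Fin 2 × Fin 2) (Fin 2 × Fin 2) ℂ} (hR : IsSepState R)
    (hS : IsSepState S) : IsSepState (R + S) := by
  obtain ⟨n, A, B, hAB, rfl⟩ := hR
  obtain ⟨k, C, D, hCD, rfl⟩ := hS
  refine ⟨n + k, Fin.append A C, Fin.append B D, fun i => ?_, by simp [Fin.sum_univ_add]⟩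
  induction i using Fin.addCases <;> simp [hAB, hCD]

theorem smul {R : Matrix (Fin 2 × Fin 2) (Fin 2 × Fin 2) ℂ} (hR : IsSepState R) {c : ℝ}
    (hc : 0 ≤ c) : IsSepState ((c : ℂ) • R) := by
  obtain ⟨n, A, B, hAB, rfl⟩ := hR
  refine ⟨n, fun i => (c : ℂ) • A i, B, fun i => ⟨(hAB i).1.smul ?_, (hAB i).2⟩, ?_⟩
  · exact_mod_cast hc
  · simp [Finset.smul_sum, smul_kronecker]

theorem posSemidef {R : Matrix (Fin 2 × Fin 2) (Fin 2 × Fin 2) ℂ} (hR : IsSepState R) :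
    R.PosSemidef := by
  obtain ⟨n, A, B, hAB, rfl⟩ := hR
  exact posSemidef_sum _ fun i _ => (hAB i).1.kronecker (hAB i).2

theorem posSemidef_partialTranspose {R : Matrix (Fin 2 × Fin 2) (Fin 2 × Fin 2) ℂ}
    (hR : IsSepState R) : R.partialTranspose.PosSemidef := by
  obtain ⟨n, A, B, hAB, rfl⟩ := hR
  simpa using posSemidef_sum _ fun i _ => (hAB i).1.kronecker (hAB i).2.transpose

end IsSepState

theorem isSepState_smul_one_add_smul_kronecker {σ : Matrix (Fin 2) (Fin 2) ℂ}
    (hσ : σ.IsHermitian) (hσσ : σ * σ = 1) {a t : ℝ} (hta : |t| ≤ a) :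
    IsSepState ((a : ℂ) • 1 + (t : ℂ) • (σ ⊗ₖ σᵀ)) := by
  set P : Matrix (Fin 2) (Fin 2) ℂ := (1 / 2 : ℂ) • (1 + σ)
  set Q : Matrix (Fin 2) (Fin 2) ℂ := (1 / 2 : ℂ) • (1 + (-1 : ℂ) • σ)
  have hP : P.PosSemidef := posSemidef_half_smul_one_add hσ hσσ
  have hQ : Q.PosSemidef := by
    simpa [Q] using posSemidef_half_smul_one_add hσ.neg (by rw [neg_mul_neg, hσσ])
  have hsplit : (a : ℂ) • 1 + (t : ℂ) • (σ ⊗ₖ σᵀ) =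
      ((a + t : ℝ) : ℂ) • (P ⊗ₖ Pᵀ + Q ⊗ₖ Qᵀ) + ((a - t : ℝ) : ℂ) • (P ⊗ₖ Qᵀ + Q ⊗ₖ Pᵀ) := by
    simp only [P, Q, transpose_smul, transpose_add, transpose_one, smul_kronecker,
      kronecker_smul, add_kronecker, kronecker_add, one_kronecker_one]
    module
  rw [hsplit]
  refine ((IsSepState.kronecker hP hP.transpose).add (.kronecker hQ hQ.transpose)).smul ?_ |>.add
    (((IsSepState.kronecker hP hQ.transpose).add (.kronecker hQ hP.transpose)).smul ?_)
  · linarith [neg_abs_le t]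
  · linarith [le_abs_self t]

noncomputable def unitalChoi (l : Fin 3 → ℝ) : Matrix (Fin 2 × Fin 2) (Fin 2 × Fin 2) ℂ :=
  (1 / 4 : ℂ) • (1 + ∑ i : Fin 3, (l i : ℂ) • (pauli i ⊗ₖ (pauli i)ᵀ))

theorem isSepState_unitalChoi {l : Fin 3 → ℝ} (hl : |l 0| + |l 1| + |l 2| ≤ 1) :
    IsSepState (unitalChoi l) := by
  have hsplit : unitalChoi l = ((1 / 4 : ℝ) : ℂ) •
      ((((1 - |l 1| - |l 2| : ℝ) : ℂ) • 1 + (l 0 : ℂ) • (pauli 0 ⊗ₖ (pauli 0)ᵀ)) +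
        (((|l 1| : ℝ) : ℂ) • 1 + (l 1 : ℂ) • (pauli 1 ⊗ₖ (pauli 1)ᵀ)) +
        (((|l 2| : ℝ) : ℂ) • 1 + (l 2 : ℂ) • (pauli 2 ⊗ₖ (pauli 2)ᵀ))) := by
    rw [unitalChoi, Fin.sum_univ_three]
    module
  have hpiece : ∀ {i : Fin 3} {a : ℝ}, |l i| ≤ a →
      IsSepState ((a : ℂ) • 1 + (l i : ℂ) • (pauli i ⊗ₖ (pauli i)ᵀ)) := fun h =>
    isSepState_smul_one_add_smul_kronecker (pauli_isHermitian _) (pauli_mul_self _) h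
  rw [hsplit]
  exact (((hpiece (by linarith)).add (hpiece le_rfl)).add (hpiece le_rfl)).smul (by norm_num)

theorem partialTranspose_unitalChoi (l : Fin 3 → ℝ) :
    (unitalChoi l).partialTranspose = unitalChoi ![l 0, -l 1, l 2] := by
  simp only [unitalChoi, Fin.sum_univ_three, partialTranspose_smul, partialTranspose_add,
    partialTranspose_one, partialTranspose_neg, partialTranspose_kronecker, pauli_transpose_zero,
    pauli_transpose_one, pauli_transpose_two, kronecker_neg]
  simp

theorem unitalChoi_bell_nonneg {l : Fin 3 → ℝ} (hl : (unitalChoi l).PosSemidef) :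
    0 ≤ 1 + l 0 + l 1 + l 2 ∧ 0 ≤ 1 + l 0 - l 1 - l 2 ∧ 0 ≤ 1 - l 0 + l 1 - l 2 ∧
      0 ≤ 1 - l 0 - l 1 + l 2 := by
  have hbell : ∀ (V : Matrix (Fin 2) (Fin 2) ℂ) (r : ℝ),
      star (fun p => V p.1 p.2) ⬝ᵥ (unitalChoi l *ᵥ fun p => V p.1 p.2) = (r / 2 : ℝ) → 0 ≤ r :=
    fun V r hr => by
      have := hl.dotProduct_mulVec_nonneg fun p => V p.1 p.2
      rw [hr, Complex.zero_le_real] at this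
      linarith
  -- the vectorisations of `1`, `σ_x`, `iσ_y`, `σ_z` are the Bell vectors
  refine ⟨hbell 1 _ ?_, hbell (pauli 0) _ ?_, hbell !![0, 1; -1, 0] _ ?_, hbell (pauli 2) _ ?_⟩ <;>
  · simp [unitalChoi, pauli, dotProduct, mulVec, Fintype.sum_prod_type, Fin.sum_univ_three,
      one_apply]
    ring

/-- A unital qubit channel in diagonal Bloch form `(L, 0)`, `L = diag(l₁,l₂,l₃)`, is
entanglement-breaking (its Choi matrix is separable) if and only if
`|l₁| + |l₂| + |l₃| ≤ 1`. -/
theorem unital_qubit_EB_iff (l : Fin 3 → ℝ) :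
    IsSepState ((1 / 4 : ℂ) •
        ((1 : Matrix (Fin 2 × Fin 2) (Fin 2 × Fin 2) ℂ) +
          ∑ i : Fin 3, (l i : ℂ) • (pauli i ⊗ₖ (pauli i)ᵀ))) ↔
      |l 0| + |l 1| + |l 2| ≤ 1 := by
  change IsSepState (unitalChoi l) ↔ _
  refine ⟨fun hsep => ?_, isSepState_unitalChoi⟩
  obtain ⟨_, _, _, _⟩ := unitalChoi_bell_nonneg hsep.posSemidef
  have hppt := unitalChoi_bell_nonneg
    (partialTranspose_unitalChoi l ▸ hsep.posSemidef_partialTranspose)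
  simp only [cons_val_zero, cons_val_one, cons_val] at hppt
  obtain ⟨_, _, _, _⟩ := hppt
  rcases abs_cases (l 0) with ⟨h0, _⟩ | ⟨h0, _⟩ <;> rcases abs_cases (l 1) with ⟨h1, _⟩ | ⟨h1, _⟩ <;>
    rcases abs_cases (l 2) with ⟨h2, _⟩ | ⟨h2, _⟩ <;> linarith
end
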